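/- For r ≥ 1, the number of images of the squaring map y ↦ y^2 on Z/2^r Z equals (2^(r-1) + 4)/3 if r is even, and (2^(r-1) + 5)/3 if r is odd. -/

import Mathlib

/-!
Write `s r` for the number of squares in `ZMod (2 ^ r)`. In `ZMod (2 ^ (k + 3))` a square is
either the square of a unit or of `2 * z`, and never both, since `4 * z ^ 2` is not a unit.
The squares `4 * z ^ 2` correspond to the squares of `ZMod (2 ^ (k + 1))` under the injective map
`x ↦ 4 * x`. The squares of units form the image of the squaring endomorphism of the unit group,
whose kernel `{u | u ^ 2 = 1}` is the preimage of `{1, -1}` in `(ZMod (2 ^ (k + 2)))ˣ`; it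
therefore has twice the order of the kernel of reduction, so the image has order
`φ (2 ^ (k + 2)) / 2 = 2 ^ k`. Hence `s (k + 3) = s (k + 1) + 2 ^ k`, and the closed form
follows by induction from `s 1 = s 2 = 2`.
-/

open Function

theorem MonoidHom.card_preimage_of_surjective {G H : Type*} [Group G] [Group H] (f : G →* H)
    (hf : Surjective f) (s : Set H) : Nat.card (f ⁻¹' s) = Nat.card f.ker * Nat.card s := by
  let e := QuotientGroup.quotientKerEquivOfSurjective f hf
  have hpre : f ⁻¹' s = QuotientGroup.mk ⁻¹' (e ⁻¹' s) := rfl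
  rw [hpre, QuotientGroup.card_preimage_mk,
    Nat.card_preimage_of_injective e.injective (by simp [e.surjective.range_eq])]

theorem Int.two_pow_add_two_dvd_sq_sub_one_iff (j : ℕ) (x : ℤ) :
    2 ^ (j + 2) ∣ x ^ 2 - 1 ↔ 2 ^ (j + 1) ∣ x - 1 ∨ 2 ^ (j + 1) ∣ x + 1 := by
  constructor
  · intro h
    obtain ⟨a, rfl⟩ : ∃ a, x = 2 * a + 1 := by
      obtain ⟨a, rfl | rfl⟩ := Int.even_or_odd' x
      · have : (2 : ℤ) ∣ 2 * (2 * a ^ 2) - 1 := by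
          refine (dvd_pow_self 2 (by omega)).trans (h.trans (dvd_of_eq ?_))
          ring
        omega
      · exact ⟨a, rfl⟩
    have ha : 2 ^ j ∣ a * (a + 1) := by
      rw [show (2 * a + 1) ^ 2 - 1 = 2 ^ 2 * (a * (a + 1)) by ring, pow_add, mul_comm] at h
      exact (mul_dvd_mul_iff_left (by norm_num)).mp h
    rw [pow_succ', show 2 * a + 1 - 1 = 2 * a by ring, show 2 * a + 1 + 1 = 2 * (a + 1) by ring,
      mul_dvd_mul_iff_left two_ne_zero, mul_dvd_mul_iff_left two_ne_zero]
    rcases Int.even_or_odd a with ha' | ha'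
    · exact .inl ((isCoprime_two_left.mpr ha'.add_one).pow_left.dvd_of_dvd_mul_right ha)
    · exact .inr ((isCoprime_two_left.mpr ha').pow_left.dvd_of_dvd_mul_left ha)
  · have h2 : (2 : ℤ) ∣ 2 ^ (j + 1) := dvd_pow_self 2 j.succ_ne_zero
    rw [show x ^ 2 - 1 = (x - 1) * (x + 1) by ring,
      show (2 : ℤ) ^ (j + 2) = 2 ^ (j + 1) * 2 by ring]
    rintro (h | h)
    · exact mul_dvd_mul h (((h2.trans h).add (dvd_refl 2)).trans (dvd_of_eq (by ring)))
    · rw [mul_comm (x - 1)]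
      exact mul_dvd_mul h (((h2.trans h).sub (dvd_refl 2)).trans (dvd_of_eq (by ring)))

namespace ZMod

theorem isUnit_iff_not_dvd_prime_pow {p m : ℕ} (hp : p.Prime) (hm : m ≠ 0) (y : ZMod (p ^ m)) :
    IsUnit y ↔ ¬ (p : ZMod (p ^ m)) ∣ y := by
  have : NeZero (p ^ m) := ⟨pow_ne_zero m hp.ne_zero⟩
  refine ⟨fun hy hpy ↦ ?_, fun hpy ↦ ?_⟩
  · exact prime_natCast_not_isUnit_pow hp (Nat.pos_of_ne_zero hm) (isUnit_of_dvd_unit hpy hy)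
  · rw [← natCast_zmod_val y, isUnit_natCast_iff_not_dvd_pow hp (Nat.pos_of_ne_zero hm)]
    rintro ⟨c, hc⟩
    exact hpy ⟨c, by rw [← natCast_zmod_val y, hc, Nat.cast_mul]⟩

theorem card_units_two_pow_succ (n : ℕ) : Nat.card (ZMod (2 ^ (n + 1)))ˣ = 2 ^ n := by
  rw [Nat.card_eq_fintype_card, card_units_eq_totient, Nat.totient_prime_pow_succ Nat.prime_two]
  simp

theorem sq_eq_one_iff_unitsMap (j : ℕ) (u : (ZMod (2 ^ (j + 2)))ˣ) :
    u ^ 2 = 1 ↔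
      unitsMap (pow_dvd_pow 2 (j + 1).le_succ) u ∈ ({1, -1} : Set (ZMod (2 ^ (j + 1)))ˣ) := by
  obtain ⟨x, hx⟩ := intCast_surjective (u : ZMod (2 ^ (j + 2)))
  simp only [Set.mem_insert_iff, Set.mem_singleton_iff, Units.ext_iff, Units.val_pow_eq_pow_val,
    unitsMap_val, ← hx, cast_intCast (pow_dvd_pow 2 (j + 1).le_succ), Units.val_one,
    Units.val_neg]
  have key := Int.two_pow_add_two_dvd_sq_sub_one_iff j x
  rw [← Nat.cast_ofNat, ← Nat.cast_pow, ← Nat.cast_pow, ← intCast_zmod_eq_zero_iff_dvd,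
    ← intCast_zmod_eq_zero_iff_dvd, ← intCast_zmod_eq_zero_iff_dvd] at key
  push_cast [sub_eq_zero, add_eq_zero_iff_eq_neg] at key
  exact key

theorem card_range_sq_units_two_pow (k : ℕ) :
    Nat.card (powMonoidHom 2 : (ZMod (2 ^ (k + 3)))ˣ →* _).range = 2 ^ k := by
  set sq : (ZMod (2 ^ (k + 3)))ˣ →* _ := powMonoidHom 2
  set π : (ZMod (2 ^ (k + 3)))ˣ →* (ZMod (2 ^ (k + 2)))ˣ := unitsMap (pow_dvd_pow 2 (by omega))
  have hπ : Surjective π := unitsMap_surjective _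
  have hG : Nat.card (ZMod (2 ^ (k + 3)))ˣ = 2 ^ (k + 2) := card_units_two_pow_succ (k + 2)
  have hH : Nat.card (ZMod (2 ^ (k + 2)))ˣ = 2 ^ (k + 1) := card_units_two_pow_succ (k + 1)
  have hpm : Nat.card ({1, -1} : Set (ZMod (2 ^ (k + 2)))ˣ) = 2 := by
    have : Fact (2 < 2 ^ (k + 2)) := ⟨by
      have := Nat.one_le_two_pow (n := k)
      rw [pow_add]
      omega⟩
    rw [Nat.card_coe_set_eq, Set.ncard_pair]
    exact fun h ↦ neg_one_ne_one (congrArg Units.val h).symm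
  have hker : Nat.card sq.ker = Nat.card π.ker * 2 := by
    rw [← SetLike.coe_sort_coe, show (sq.ker : Set _) = π ⁻¹' {1, -1} from
      Set.ext (sq_eq_one_iff_unitsMap (k + 1)), π.card_preimage_of_surjective hπ, hpm]
  have hsq : Nat.card sq.ker * Nat.card sq.range = 2 ^ (k + 2) := by
    rw [← Subgroup.index_ker, sq.ker.card_mul_index, hG]
  have hπker : Nat.card π.ker * 2 ^ (k + 1) = 2 ^ (k + 2) := by
    have := π.card_preimage_of_surjective hπ Set.univ
    rwa [Set.preimage_univ, Nat.card_univ, Nat.card_univ, hG, hH, eq_comm] at this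
  have hpos : 0 < Nat.card π.ker := Nat.card_pos
  rw [hker] at hsq
  generalize Nat.card π.ker = c at hsq hπker hpos
  refine Nat.eq_of_mul_eq_mul_left (Nat.mul_pos hpos two_pos) ?_
  rw [hsq, ← hπker]
  ring

/-- Multiplication by `d`, as a map `ZMod n →+ ZMod m` when `d * n = m`. -/
def scaleHom (d : ℕ) {n m : ℕ} (h : d * n = m) : ZMod n →+ ZMod m :=
  lift n ⟨(AddMonoidHom.mulLeft (d : ZMod m)).comp (Int.castAddHom (ZMod m)), by
    simp [← Nat.cast_mul, h]⟩

theorem scaleHom_castHom (d : ℕ) {n m : ℕ} (h : d * n = m) (w : ZMod m) :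
    scaleHom d h (castHom (Dvd.intro_left d h) (ZMod n) w) = d * w := by
  obtain ⟨w, rfl⟩ := intCast_surjective w
  simp [scaleHom]

theorem scaleHom_injective {d : ℕ} (hd : d ≠ 0) {n m : ℕ} (h : d * n = m) :
    Injective (scaleHom d h) := by
  refine (injective_iff_map_eq_zero _).mpr fun x hx ↦ ?_
  obtain ⟨x, rfl⟩ := intCast_surjective x
  subst h
  simp only [scaleHom, lift_coe, AddMonoidHom.coe_comp, comp_apply, Int.coe_castAddHom,
    AddMonoidHom.coe_mulLeft] at hx
  rw [← Int.cast_natCast, ← Int.cast_mul, intCast_zmod_eq_zero_iff_dvd, Nat.cast_mul,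
    mul_dvd_mul_iff_left (by exact_mod_cast hd)] at hx
  exact (intCast_zmod_eq_zero_iff_dvd x n).mpr hx

theorem range_sq_two_pow_eq_union (k : ℕ) :
    Set.range (fun y : ZMod (2 ^ (k + 3)) ↦ y ^ 2) =
      Units.val '' (powMonoidHom 2 : (ZMod (2 ^ (k + 3)))ˣ →* _).range ∪
        scaleHom 4 (by ring) '' Set.range (fun y : ZMod (2 ^ (k + 1)) ↦ y ^ 2) := by
  have h4 : 4 * 2 ^ (k + 1) = 2 ^ (k + 3) := by ring
  ext x
  constructor
  · rintro ⟨y, rfl⟩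
    by_cases hy : IsUnit y
    · exact .inl ⟨hy.unit ^ 2, ⟨hy.unit, rfl⟩, by simp⟩
    · obtain ⟨z, rfl⟩ :=
        not_not.mp ((isUnit_iff_not_dvd_prime_pow Nat.prime_two (by omega) y).not.mp hy)
      refine .inr ⟨castHom (Dvd.intro_left 4 h4) _ z ^ 2, ⟨_, rfl⟩, ?_⟩
      rw [← map_pow, scaleHom_castHom]
      ring
  · rintro (⟨_, ⟨u, rfl⟩, rfl⟩ | ⟨_, ⟨y, rfl⟩, rfl⟩)
    · exact ⟨u, by simp⟩
    · obtain ⟨z, rfl⟩ := castHom_surjective (Dvd.intro_left 4 h4) y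
      refine ⟨2 * z, ?_⟩
      dsimp only
      rw [← map_pow, scaleHom_castHom]
      push_cast
      ring

theorem card_range_sq_two_pow_add_three (k : ℕ) :
    Nat.card (Set.range (fun y : ZMod (2 ^ (k + 3)) ↦ y ^ 2)) =
      Nat.card (Set.range (fun y : ZMod (2 ^ (k + 1)) ↦ y ^ 2)) + 2 ^ k := by
  rw [Nat.card_coe_set_eq, Nat.card_coe_set_eq, range_sq_two_pow_eq_union,
    Set.ncard_union_eq ?disjoint (Set.toFinite _) (Set.toFinite _),
    Set.ncard_image_of_injective _ Units.val_injective,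
    Set.ncard_image_of_injective _ (scaleHom_injective four_ne_zero _), ← Nat.card_coe_set_eq,
    SetLike.coe_sort_coe, card_range_sq_units_two_pow, add_comm]
  case disjoint =>
    rw [Set.disjoint_left]
    rintro _ ⟨_, ⟨u, rfl⟩, rfl⟩ ⟨_, ⟨y, rfl⟩, hy⟩
    obtain ⟨z, rfl⟩ :=
      castHom_surjective (Dvd.intro_left 4 (by ring : 4 * 2 ^ (k + 1) = 2 ^ (k + 3))) y
    dsimp only at hy
    rw [← map_pow, scaleHom_castHom] at hy
    refine (isUnit_iff_not_dvd_prime_pow Nat.prime_two (by omega) _).mp (powMonoidHom 2 u).isUnit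
      ⟨2 * z ^ 2, ?_⟩
    rw [← hy]
    push_cast
    ring

theorem three_mul_card_range_sq_two_pow :
    ∀ k : ℕ, 3 * Nat.card (Set.range (fun y : ZMod (2 ^ (k + 1)) ↦ y ^ 2)) =
      2 ^ k + if Even k then 5 else 4
  | 0 => by
    rw [Nat.card_coe_set_eq, Set.ncard_eq_toFinset_card', Set.toFinset_range]
    decide
  | 1 => by
    rw [Nat.card_coe_set_eq, Set.ncard_eq_toFinset_card', Set.toFinset_range]
    decide
  | k + 2 => by
    rw [card_range_sq_two_pow_add_three, mul_add, three_mul_card_range_sq_two_pow k]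
    simp only [Nat.even_add_one, not_not]
    ring

end ZMod

theorem card_squares_twoPower (r : ℕ) (hr : 1 ≤ r) :
    (Even r →
      Nat.card (Set.range (fun y : ZMod (2 ^ r) => y ^ 2)) = (2 ^ (r - 1) + 4) / 3) ∧
    (Odd r →
      Nat.card (Set.range (fun y : ZMod (2 ^ r) => y ^ 2)) = (2 ^ (r - 1) + 5) / 3) := by
  obtain ⟨k, rfl⟩ := Nat.exists_eq_add_of_le' hr
  have h := ZMod.three_mul_card_range_sq_two_pow k
  rw [Nat.add_sub_cancel]
  refine ⟨fun hr ↦ ?_, fun hr ↦ ?_⟩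
  · rw [if_neg (Nat.even_add_one.mp hr)] at h
    omega
  · rw [if_pos (Nat.not_odd_iff_even.mp (Nat.odd_add_one.mp hr))] at h
    omega
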